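/- arXiv:1909.05590 — 3 statements merged into one kernel-verified Lean document; each statement's English description precedes it below -/
import Mathlib

section
/- Let f : [0,∞) → ℝ be càdlàg with only positive jumps, and let (l, r) with r < ∞ be an excursion of f above its past minimum, i.e., f(t) − f̲(t) > 0 for all t ∈ (l, r), with l, r in the closure of the zero set Z_f = {t : f(t) = f̲(t)}. Then f is continuous at r and f(r) = f̲(r) (so r ∈ Z_f). -/
/-!
Points of the open excursion interval `(l, r)` are not contact points with the running
infimum, so the contact points accumulating at `r` do so from the right. Right-continuity
then makes `f r` a lower bound of `f` on `[0, r]`, i.e. `f r` is the running infimum at `r`.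
On `(l, r)` the function stays above its running infimum, which is at least `f r`, so the
left limit at `r` is at least `f r`; since jumps are only upwards, it equals `f r`.
-/

open Set Filter Topology

theorem IsCompact.bddBelow_image_of_isBoundedUnder {X β : Type*} [TopologicalSpace X]
    [Preorder β] [IsCodirectedOrder β] [Nonempty β] {f : X → β} {K : Set X} (hK : IsCompact K)
    (hf : ∀ x ∈ K, IsBoundedUnder (· ≥ ·) (𝓝[K] x) f) : BddBelow (f '' K) := by
  refine hK.induction_on (p := fun s => BddBelow (f '' s))
    (by simp only [image_empty, bddBelow_empty]) (fun s t hst ht => ht.mono (image_mono hst))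
    (fun s t hs ht => by simpa only [image_union] using hs.union ht) fun x hx => ?_
  obtain ⟨b, hb⟩ := hf x hx
  obtain ⟨t, ht, htb⟩ := (eventually_map.mp hb).exists_mem
  exact ⟨t, ht, b, by rintro _ ⟨y, hy, rfl⟩; exact htb y hy⟩

theorem isBoundedUnder_ge_nhds_of_tendsto_left_right {α : Type*} [TopologicalSpace α]
    [LinearOrder α] {f : α → ℝ} {x : α} {c : ℝ}
    (hleft : Tendsto f (𝓝[<] x) (𝓝 c)) (hright : ContinuousWithinAt f (Ici x) x) :
    IsBoundedUnder (· ≥ ·) (𝓝 x) f := by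
  rw [← nhdsLT_sup_nhdsGE, IsBoundedUnder, map_sup]
  exact isBounded_sup hleft.isBoundedUnder_ge hright.tendsto.isBoundedUnder_ge

theorem bddBelow_image_Icc_of_cadlag {f L : ℝ → ℝ}
    (hrc : ∀ t ∈ Ici (0:ℝ), ContinuousWithinAt f (Ici t) t)
    (hll : ∀ t : ℝ, 0 < t → Tendsto f (𝓝[<] t) (𝓝 (L t))) (T : ℝ) :
    BddBelow (f '' Icc 0 T) :=
  isCompact_Icc.bddBelow_image_of_isBoundedUnder fun x hx => by
    rcases hx.1.eq_or_lt with rfl | hx0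
    · exact (hrc 0 self_mem_Ici).tendsto.isBoundedUnder_ge.mono
        (nhdsWithin_mono _ Icc_subset_Ici_self)
    · exact (isBoundedUnder_ge_nhds_of_tendsto_left_right (hll x hx0) (hrc x hx.1)).mono
        nhdsWithin_le_nhds

theorem mem_closure_inter_Ici_of_disjoint_Ioo {α : Type*} [TopologicalSpace α] [LinearOrder α]
    [OrderTopology α] {s : Set α} {l r : α} (hlr : l < r) (hs : Disjoint s (Ioo l r))
    (hr : r ∈ closure s) : r ∈ closure (s ∩ Ici r) := by
  rw [mem_closure_iff_nhdsWithin_neBot] at hr ⊢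
  rw [← nhdsWithin_inter_of_mem' (mem_nhdsWithin_of_mem_nhds (Ioi_mem_nhds hlr))] at hr
  refine hr.mono (nhdsWithin_mono _ fun t ⟨hts, hlt⟩ => ⟨hts, ?_⟩)
  exact not_lt.mp fun htr => hs.ne_of_mem hts ⟨hlt, htr⟩ rfl

/-- The running infimum `f̲ t = inf_{0 ≤ s ≤ t} f s`. -/
noncomputable def runningInf (f : ℝ → ℝ) (t : ℝ) : ℝ := sInf (f '' Icc 0 t)

/-- The zero set `Z_f` of `f - f̲` in `[0, ∞)`. -/
def atRunningInf (f : ℝ → ℝ) : Set ℝ := {t | 0 ≤ t ∧ f t = runningInf f t}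

theorem runningInf_le_runningInf {f : ℝ → ℝ} (hbdd : ∀ T, BddBelow (f '' Icc 0 T))
    {s t : ℝ} (hs : 0 ≤ s) (hst : s ≤ t) :
    runningInf f t ≤ runningInf f s :=
  csInf_le_csInf (hbdd t) ⟨f 0, mem_image_of_mem f ⟨le_rfl, hs⟩⟩
    (image_mono (Icc_subset_Icc_right hst))

theorem runningInf_le_apply {f : ℝ → ℝ} (hbdd : ∀ T, BddBelow (f '' Icc 0 T))
    {s t : ℝ} (hs : s ∈ Icc 0 t) : runningInf f t ≤ f s :=
  csInf_le (hbdd t) (mem_image_of_mem f hs)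

theorem eq_runningInf_of_mem_closure {f : ℝ → ℝ} (hbdd : ∀ T, BddBelow (f '' Icc 0 T))
    {r : ℝ} (hr : 0 ≤ r)
    (hrc : ContinuousWithinAt f (Ici r) r) (hrZ : r ∈ closure (atRunningInf f ∩ Ici r)) :
    f r = runningInf f r := by
  have := mem_closure_iff_nhdsWithin_neBot.mp hrZ
  have hlower : ∀ s ∈ Icc 0 r, f r ≤ f s := fun s hs => by
    refine le_of_tendsto (hrc.mono (inter_subset_right (s := atRunningInf f))) ?_
    filter_upwards [self_mem_nhdsWithin] with t ⟨⟨_, hft⟩, hrt⟩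
    exact hft ▸ runningInf_le_apply hbdd ⟨hs.1, hs.2.trans hrt⟩
  have hleast : IsLeast (f '' Icc 0 r) (f r) :=
    ⟨mem_image_of_mem f ⟨hr, le_rfl⟩, by rintro _ ⟨s, hs, rfl⟩; exact hlower s hs⟩
  exact hleast.csInf_eq.symm

theorem excursion_endpoint_continuous_general (f : ℝ → ℝ) (L : ℝ → ℝ) (l r : ℝ)
    (hrc : ∀ t ∈ Ici (0:ℝ), ContinuousWithinAt f (Ici t) t)
    (hll : ∀ t : ℝ, 0 < t → Tendsto f (nhdsWithin t (Iio t)) (nhds (L t)))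
    (hjump : ∀ t : ℝ, 0 < t → L t ≤ f t)
    (hl : 0 ≤ l) (hlr : l < r)
    (hexc : ∀ t ∈ Ioo l r, sInf (f '' Icc 0 t) < f t)
    (hrZ : r ∈ closure {t : ℝ | 0 ≤ t ∧ f t = sInf (f '' Icc 0 t)}) :
    ContinuousAt f r ∧ f r = sInf (f '' Icc 0 r) := by
  have hbdd := bddBelow_image_Icc_of_cadlag hrc hll
  have hr0 : 0 < r := hl.trans_lt hlr
  have hdisj : Disjoint (atRunningInf f) (Ioo l r) :=
    disjoint_left.mpr fun t ht htlr => (hexc t htlr).ne ht.2.symm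
  have hfr : f r = runningInf f r := eq_runningInf_of_mem_closure hbdd hr0.le (hrc r hr0.le)
    (mem_closure_inter_Ici_of_disjoint_Ioo hlr hdisj hrZ)
  have hLr : L r = f r := by
    refine le_antisymm (hjump r hr0) (ge_of_tendsto (hll r hr0) ?_)
    filter_upwards [Ioo_mem_nhdsLT hlr] with t ht
    calc f r = runningInf f r := hfr
      _ ≤ runningInf f t := runningInf_le_runningInf hbdd (hl.trans ht.1.le) ht.2.le
      _ ≤ f t := (hexc t ht).le
  refine ⟨continuousAt_iff_continuous_left_right.mpr ⟨?_, hrc r hr0.le⟩, hfr⟩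
  have hleft : Tendsto f (𝓝[<] r) (𝓝 (f r)) := hLr ▸ hll r hr0
  exact continuousWithinAt_Iio_iff_Iic.mp hleft

/-- If `f` is càdlàg with only positive jumps and `(l, r)` is an excursion of `f` above
its past minimum, then `f` is continuous at `r` and `f r` equals the running minimum at `r`. -/
theorem excursion_endpoint_continuous (f : ℝ → ℝ) (L : ℝ → ℝ) (l r : ℝ)
    (hrc : ∀ t ∈ Ici (0:ℝ), ContinuousWithinAt f (Ici t) t)
    (hll : ∀ t : ℝ, 0 < t → Tendsto f (nhdsWithin t (Iio t)) (nhds (L t)))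
    (hjump : ∀ t : ℝ, 0 < t → L t ≤ f t)
    (hl : 0 ≤ l) (hlr : l < r)
    (hexc : ∀ t ∈ Ioo l r, sInf (f '' Icc 0 t) < f t)
    (hlZ : l ∈ closure {t : ℝ | 0 ≤ t ∧ f t = sInf (f '' Icc 0 t)})
    (hrZ : r ∈ closure {t : ℝ | 0 ≤ t ∧ f t = sInf (f '' Icc 0 t)}) :
    ContinuousAt f r ∧ f r = sInf (f '' Icc 0 r) :=
  excursion_endpoint_continuous_general f L l r hrc hll hjump hl hlr hexc hrZ
end

section
/- Let (θ_i)_{i≥1} be positive reals with ∑_i θ_i² < ∞, let λ > 0, and let (N_i(t))_{t≥0} be independent Poisson processes with rates θ_i. Define L(t) = λ∑_i θ_i N_i(t) − t and R₀ = inf{t > 0 : L(t) < 0}. Then P(R₀ = 0) = 1; that is, the process L goes strictly below 0 immediately after time 0, almost surely. -/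
open MeasureTheory ProbabilityTheory Filter Topology
open scoped ENNReal NNReal

/-! If `L(t) ≥ 0` then either `Nᵢ(t) ≥ 1` for some `i < K`, or `λ ∑_{i ≥ K} θᵢ Nᵢ(t) ≥ t`; in both
cases `Y = ∑_{i < K} Nᵢ(t) + (λ / t) ∑_{i ≥ K} θᵢ Nᵢ(t) ≥ 1`, and Markov's inequality bounds the
probability of this by `𝔼 Y = t ∑_{i < K} θᵢ + λ ∑_{i ≥ K} θᵢ²`. Taking first `K` large, then `t`
small, makes this arbitrarily small, so almost surely `L(t) < 0` for arbitrarily small `t > 0`. -/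

namespace ProbabilityTheory

lemma lintegral_natCast_poissonMeasure (r : ℝ≥0) :
    ∫⁻ n, (n : ℝ≥0∞) ∂poissonMeasure r = r := by
  set p : ℕ → ℝ≥0∞ := fun n => poissonMeasure r {n}
  have hshift : ∀ n : ℕ, ((n + 1 : ℕ) : ℝ≥0∞) * p (n + 1) = r * p n := by
    intro n
    simp only [p, poissonMeasure_singleton, ← ENNReal.ofReal_natCast, ← ENNReal.ofReal_coe_nnreal,
      ← ENNReal.ofReal_mul (Nat.cast_nonneg _), ← ENNReal.ofReal_mul r.coe_nonneg]
    congr 1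
    rw [Nat.factorial_succ]
    push_cast
    field_simp
    ring
  have hmass : ∑' n, p n = 1 := by
    simpa using (lintegral_countable' (μ := poissonMeasure r) fun _ => 1).symm
  calc ∫⁻ n, (n : ℝ≥0∞) ∂poissonMeasure r = ∑' n : ℕ, (n + 1 : ℕ) * p (n + 1) := by
        rw [lintegral_countable', tsum_eq_zero_add' ENNReal.summable]
        simp [p]
    _ = r := by simp only [hshift, ENNReal.tsum_mul_left, hmass, mul_one]

lemma HasLaw.lintegral_natCast_of_poissonMeasure {Ω : Type*} [MeasurableSpace Ω] {P : Measure Ω}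
    {X : Ω → ℕ} {r : ℝ≥0} (hX : HasLaw X (poissonMeasure r) P) :
    ∫⁻ ω, (X ω : ℝ≥0∞) ∂P = r := by
  rw [hX.lintegral_comp (by fun_prop), lintegral_natCast_poissonMeasure]

lemma hasLaw_poissonMeasure_of_measure_eq {Ω : Type*} [MeasurableSpace Ω] {P : Measure Ω}
    {X : Ω → ℕ} (hX : Measurable X) {r : ℝ≥0}
    (h : ∀ k : ℕ, P {ω | X ω = k} = ENNReal.ofReal (Real.exp (-r) * r ^ k / k.factorial)) :
    HasLaw X (poissonMeasure r) P where
  aemeasurable := hX.aemeasurable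
  map_eq := Measure.ext_of_singleton fun k => by
    rw [Measure.map_apply hX (measurableSet_singleton k), poissonMeasure_singleton]
    exact h k

end ProbabilityTheory

theorem ae_frequently_mem_of_frequently_measure_compl_lt {Ω ι : Type*} [MeasurableSpace Ω]
    {μ : Measure Ω} {l : Filter ι} [l.IsCountablyGenerated] {A : ι → Set Ω}
    (h : ∀ ε > 0, ∃ᶠ t in l, μ (A t)ᶜ < ε) : ∀ᵐ ω ∂μ, ∃ᶠ t in l, ω ∈ A t := by
  obtain ⟨U, hU⟩ := l.exists_antitone_basis
  simp only [hU.frequently_iff, true_implies]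
  refine ae_all_iff.2 fun m => ae_iff.2 <| nonpos_iff_eq_zero.1 <| not_lt.1 fun hpos => ?_
  obtain ⟨t, hlt, htU⟩ := ((h _ hpos).and_eventually (hU.mem m)).exists
  refine (measure_mono fun ω hω hωA => ?_).not_gt hlt
  exact hω ⟨t, htU, hωA⟩

theorem iInf_ofReal_eq_zero_of_frequently {p : ℝ → Prop} (h : ∃ᶠ t in 𝓝[>] 0, p t) :
    ⨅ (t : ℝ) (_ : 0 < t ∧ p t), ENNReal.ofReal t = 0 := by
  have hlim : Tendsto ENNReal.ofReal (𝓝[>] 0) (𝓝 0) := by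
    simpa using (ENNReal.continuous_ofReal.tendsto 0).mono_left nhdsWithin_le_nhds
  refine nonpos_iff_eq_zero.1 (ge_of_tendsto_of_frequently hlim ?_)
  exact (h.and_eventually self_mem_nhdsWithin).mono fun t ht => iInf₂_le t ⟨ht.2, ht.1⟩

theorem mul_tsum_mul_natCast_lt {θ : ℕ → ℝ} (hθ : ∀ i, 0 ≤ θ i) {lam t : ℝ} (hlam : 0 ≤ lam)
    (ht : 0 < t) {n : ℕ → ℕ} {K : ℕ}
    (h : ∑ i ∈ Finset.range K, (n i : ℝ≥0∞) +
      ∑' i, ENNReal.ofReal (lam * θ (i + K) / t) * n (i + K) < 1) :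
    lam * ∑' i, θ i * n i < t := by
  have hhead : ∀ i ∈ Finset.range K, ENNReal.ofReal (θ i) * n i = 0 := fun i hi => by
    have : (n i : ℝ≥0∞) < 1 :=
      ((Finset.single_le_sum (fun _ _ => zero_le) hi).trans le_self_add).trans_lt h
    simp [Nat.cast_lt_one.1 (by exact_mod_cast this)]
  have htail : ENNReal.ofReal lam * ∑' i, ENNReal.ofReal (θ (i + K)) * n (i + K)
      < ENNReal.ofReal t := by
    calc ENNReal.ofReal lam * ∑' i, ENNReal.ofReal (θ (i + K)) * n (i + K)
        = ENNReal.ofReal t * ∑' i, ENNReal.ofReal (lam * θ (i + K) / t) * n (i + K) := by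
          rw [← ENNReal.tsum_mul_left, ← ENNReal.tsum_mul_left]
          refine tsum_congr fun i => ?_
          rw [← mul_assoc, ← mul_assoc, ← ENNReal.ofReal_mul hlam, ← ENNReal.ofReal_mul ht.le]
          congr 2
          field_simp
      _ < ENNReal.ofReal t * 1 :=
          ENNReal.mul_lt_mul_right (by simpa using ht) ENNReal.ofReal_ne_top
            (le_add_self.trans_lt h)
      _ = ENNReal.ofReal t := mul_one _
  -- Also true when the real series diverges: both sides are then `0`.
  have hreal : ∑' i, θ i * n i = (∑' i, ENNReal.ofReal (θ i) * n i).toReal := by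
    rw [ENNReal.tsum_toReal_eq fun i => by finiteness]
    simp [ENNReal.toReal_ofReal (hθ _)]
  rw [hreal, ← ENNReal.summable.sum_add_tsum_nat_add' (k := K), Finset.sum_eq_zero hhead, zero_add,
    ← ENNReal.toReal_ofReal hlam, ← ENNReal.toReal_mul]
  exact ENNReal.toReal_lt_of_lt_ofReal htail

theorem measure_le_mul_tsum_le {Ω : Type*} [MeasurableSpace Ω] {P : Measure Ω}
    {X : ℕ → Ω → ℕ} (hX : ∀ i, Measurable (X i)) {θ : ℕ → ℝ} (hθ : ∀ i, 0 ≤ θ i)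
    {lam t : ℝ} (hlam : 0 ≤ lam) (ht : 0 < t)
    (hmean : ∀ i, ∫⁻ ω, (X i ω : ℝ≥0∞) ∂P = ENNReal.ofReal (θ i * t)) (K : ℕ) :
    P {ω | t ≤ lam * ∑' i, θ i * X i ω} ≤
      ENNReal.ofReal (t * ∑ i ∈ Finset.range K, θ i) +
        ∑' i, ENNReal.ofReal (lam * θ (i + K) ^ 2) := by
  set Y : Ω → ℝ≥0∞ := fun ω => ∑ i ∈ Finset.range K, (X i ω : ℝ≥0∞) +
      ∑' i, ENNReal.ofReal (lam * θ (i + K) / t) * X (i + K) ω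
  have hXe : ∀ i, Measurable fun ω => (X i ω : ℝ≥0∞) := fun i => measurable_from_nat.comp (hX i)
  have hhead : Measurable fun ω => ∑ i ∈ Finset.range K, (X i ω : ℝ≥0∞) :=
    Finset.measurable_sum _ fun i _ => hXe i
  have hY : Measurable Y :=
    hhead.add (Measurable.tsum fun i => (hXe (i + K)).const_mul _)
  calc P {ω | t ≤ lam * ∑' i, θ i * X i ω} ≤ P {ω | 1 ≤ Y ω} :=
        measure_mono fun ω hω => not_lt.1 fun h => (mul_tsum_mul_natCast_lt hθ hlam ht h).not_ge hω
    _ ≤ ∫⁻ ω, Y ω ∂P := by simpa using mul_meas_ge_le_lintegral₀ hY.aemeasurable 1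
    _ = _ := by
      rw [lintegral_add_left hhead, lintegral_finsetSum _ fun i _ => hXe i,
        lintegral_tsum fun i => ((hXe (i + K)).const_mul _).aemeasurable]
      congr 1
      · rw [Finset.mul_sum, ENNReal.ofReal_sum_of_nonneg fun i _ => by have := hθ i; positivity]
        exact Finset.sum_congr rfl fun i _ => by rw [hmean, mul_comm]
      · refine tsum_congr fun i => ?_
        rw [lintegral_const_mul _ (hXe _), hmean,
          ← ENNReal.ofReal_mul (by have := hθ (i + K); positivity)]
        congr 1
        field_simp

theorem poisson_drift_hits_below_zero_immediately_general
    {Ω : Type*} [MeasurableSpace Ω] (P : Measure Ω) [IsProbabilityMeasure P]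
    (θ : ℕ → ℝ) (hθ : ∀ i, 0 < θ i) (hθ2 : Summable (fun i => θ i ^ 2))
    (lam : ℝ) (hlam : 0 < lam)
    (N : ℕ → ℝ → Ω → ℕ)
    (hmeas : ∀ i t, Measurable (fun ω => N i t ω))
    (hPoisson : ∀ i, ∀ t : ℝ, 0 ≤ t → ∀ k : ℕ,
      P {ω | N i t ω = k} =
        ENNReal.ofReal (Real.exp (-(θ i * t)) * (θ i * t) ^ k / (Nat.factorial k))) :
    P {ω | (⨅ (t : ℝ) (_ : 0 < t ∧ lam * (∑' i, θ i * (N i t ω : ℝ)) - t < 0),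
        ENNReal.ofReal t) = 0} = 1 := by
  have hmean : ∀ t, 0 ≤ t → ∀ i, ∫⁻ ω, (N i t ω : ℝ≥0∞) ∂P = ENNReal.ofReal (θ i * t) :=
    fun t ht i => by
      have hθt : 0 ≤ θ i * t := mul_nonneg (hθ i).le ht
      exact (hasLaw_poissonMeasure_of_measure_eq (hmeas i t) (r := ⟨θ i * t, hθt⟩)
        (hPoisson i t ht)).lintegral_natCast_of_poissonMeasure.trans ENNReal.ofReal_coe_nnreal.symm
  have htail : Tendsto (fun K => ∑' i, ENNReal.ofReal (lam * θ (i + K) ^ 2)) atTop (𝓝 0) :=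
    ENNReal.tendsto_sum_nat_add _ (hθ2.mul_left lam).tsum_ofReal_ne_top
  have hfreq : ∀ᵐ ω ∂P, ∃ᶠ t in 𝓝[>] 0, lam * (∑' i, θ i * (N i t ω : ℝ)) - t < 0 := by
    refine ae_frequently_mem_of_frequently_measure_compl_lt fun ε hε => ?_
    obtain ⟨K, hK⟩ := (htail.eventually (gt_mem_nhds (ENNReal.half_pos hε.ne'))).exists
    have hhead : ∀ᶠ t in 𝓝[>] 0, ENNReal.ofReal (t * ∑ i ∈ Finset.range K, θ i) < ε / 2 := by
      have hlim : Tendsto (fun t => ENNReal.ofReal (t * ∑ i ∈ Finset.range K, θ i)) (𝓝 0) (𝓝 0) :=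
        (ENNReal.continuous_ofReal.comp (continuous_id.mul continuous_const)).tendsto' 0 0 (by simp)
      exact (hlim.mono_left nhdsWithin_le_nhds).eventually (gt_mem_nhds (ENNReal.half_pos hε.ne'))
    refine ((hhead.and self_mem_nhdsWithin).mono fun t ⟨hsmall, ht⟩ => ?_).frequently
    calc P {ω | lam * (∑' i, θ i * (N i t ω : ℝ)) - t < 0}ᶜ
        ≤ P {ω | t ≤ lam * ∑' i, θ i * N i t ω} := measure_mono fun ω hω => by simpa using hω
      _ ≤ _ := measure_le_mul_tsum_le (hmeas · t) (fun i => (hθ i).le) hlam.le ht (hmean t ht.le) K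
      _ < ε / 2 + ε / 2 := ENNReal.add_lt_add hsmall hK
      _ = ε := ENNReal.add_halves ε
  rw [← measure_univ (μ := P)]
  exact measure_congr (ae_eq_univ.2 (hfreq.mono fun ω => iInf_ofReal_eq_zero_of_frequently))

/-- Let `Nᵢ` be independent rate-`θᵢ` Poisson processes with `∑ θᵢ² < ∞`, and let
`L(t) = λ ∑ᵢ θᵢ Nᵢ(t) − t`. Then `R₀ := inf{t > 0 : L(t) < 0}` equals `0` almost surely:
the process goes strictly below `0` immediately after time `0`. -/
theorem poisson_drift_hits_below_zero_immediately
    {Ω : Type*} [MeasurableSpace Ω] (P : Measure Ω) [IsProbabilityMeasure P]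
    (θ : ℕ → ℝ) (hθ : ∀ i, 0 < θ i) (hθ2 : Summable (fun i => θ i ^ 2))
    (lam : ℝ) (hlam : 0 < lam)
    (N : ℕ → ℝ → Ω → ℕ)
    (hN0 : ∀ i ω, N i 0 ω = 0)
    (hmono : ∀ i ω, Monotone (fun t => N i t ω))
    (hmeas : ∀ i t, Measurable (fun ω => N i t ω))
    (hPoisson : ∀ i, ∀ t : ℝ, 0 ≤ t → ∀ k : ℕ,
      P {ω | N i t ω = k} =
        ENNReal.ofReal (Real.exp (-(θ i * t)) * (θ i * t) ^ k / (Nat.factorial k)))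
    (hindep : iIndepFun
      (fun i ω => (fun t => N i t ω : ℝ → ℕ)) P) :
    P {ω | (⨅ (t : ℝ) (_ : 0 < t ∧ lam * (∑' i, θ i * (N i t ω : ℝ)) - t < 0),
        ENNReal.ofReal t) = 0} = 1 :=
  poisson_drift_hits_below_zero_immediately_general P θ hθ hθ2 lam hlam N hmeas hPoisson
end

section
/- Let λ > 0, t > 0, v ∈ ℝ, let (θ_j)_{j≥1} be positive reals with ∑_j θ_j² < ∞, let ξ_j ~ Exp(θ_j) be independent, and set S(t) = λ∑_j θ_j 1{ξ_j ≤ t} − t. Then the characteristic function φ_t(v) = E[e^{i v S(t)}] satisfies |φ_t(v)|² = ∏_{j=1}^∞ (1 − 2e^{−tθ_j}(1 − e^{−tθ_j})(1 − cos(vλθ_j))), and in particular |φ_t(v)|² ≤ exp(−2∑_j e^{−tθ_j}(1 − e^{−tθ_j})(1 − cos(vλθ_j))). -/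
/-!
Write `S(t) = λ T - t` with `T = ∑ⱼ Yⱼ`, `Yⱼ = θⱼ 1{ξⱼ ≤ t}`. The `Yⱼ` are independent
Bernoulli-type jumps with `P(Yⱼ = θⱼ) = pⱼ = 1 - e^{-tθⱼ}`, and `∑ⱼ E Yⱼ ≤ t ∑ⱼ θⱼ² < ∞`, so the
series converges almost surely. The shift by `t` only multiplies `φ_t(v)` by a unimodular
constant, and by independence and dominated convergence the characteristic function of `λT` is the
limit of the partial products of `1 - pⱼ + pⱼ e^{ivλθⱼ}`, whose squared moduli are
`1 - 2pⱼ(1 - pⱼ)(1 - cos vλθⱼ)`. These factors lie in `[0, 1]`, so their infinite product converges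
unconditionally, and `1 - x ≤ e^{-x}` gives the bound.
-/

open MeasureTheory ProbabilityTheory Set Filter Topology Complex

theorem Real.multipliable_of_nonneg_of_le_one {ι : Type*} {f : ι → ℝ} (h0 : ∀ i, 0 ≤ f i)
    (h1 : ∀ i, f i ≤ 1) : Multipliable f :=
  ⟨_, tendsto_atTop_ciInf (Finset.prod_anti_set_of_le_one h0 h1)
    ⟨0, by rintro _ ⟨s, rfl⟩; exact Finset.prod_nonneg fun i _ => h0 i⟩⟩

theorem Real.tprod_le_exp_neg_tsum_one_sub {ι : Type*} {f : ι → ℝ} (h0 : ∀ i, 0 ≤ f i)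
    (h1 : ∀ i, f i ≤ 1) : ∏' i, f i ≤ Real.exp (-∑' i, (1 - f i)) := by
  have hf := (Real.multipliable_of_nonneg_of_le_one h0 h1).hasProd
  by_cases hs : Summable fun i => 1 - f i
  · exact le_of_tendsto_of_tendsto' hf hs.hasSum.neg.rexp fun s =>
      Finset.prod_le_prod (fun i _ => h0 i) fun i _ => by
        simpa using Real.one_sub_le_exp_neg (1 - f i)
  · -- the divergent sum has the junk value `0`, so the bound reads `∏' i, f i ≤ 1`
    rw [tsum_eq_zero_of_not_summable hs, neg_zero, Real.exp_zero]
    exact le_of_tendsto' hf fun s => Finset.prod_le_one (fun i _ => h0 i) fun i _ => h1 i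

theorem Complex.norm_sq_one_sub_add_mul_exp_mul_I (p α : ℝ) :
    ‖1 - p + p * exp (α * I)‖ ^ 2 = 1 - 2 * p * (1 - p) * (1 - Real.cos α) := by
  rw [Complex.sq_norm, exp_mul_I, normSq_apply]
  simp only [add_re, add_im, mul_re, mul_im, sub_re, sub_im, ofReal_re, ofReal_im, one_re,
    one_im, cos_ofReal_re, cos_ofReal_im, sin_ofReal_re, sin_ofReal_im, I_re, I_im]
  linear_combination p ^ 2 * Real.sin_sq_add_cos_sq α

section

variable {Ω : Type*} [MeasurableSpace Ω] {P : Measure Ω}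

theorem ae_summable_of_summable_integral_norm {E ι : Type*} [NormedAddCommGroup E]
    [CompleteSpace E] [Countable ι] {Y : ι → Ω → E} (hY : ∀ j, Integrable (Y j) P)
    (hs : Summable fun j => ∫ ω, ‖Y j ω‖ ∂P) : ∀ᵐ ω ∂P, Summable fun j => Y j ω := by
  refine (summable_norm_of_tsum_eLpNorm_ne_top le_rfl (fun j => (hY j).1) ?_).mono
    fun ω h => h.of_norm
  simp_rw [eLpNorm_one_eq_lintegral_enorm, ← ofReal_integral_norm_eq_lintegral_enorm (hY _),
    ← ENNReal.ofReal_tsum_of_nonneg (fun j => integral_nonneg fun ω => norm_nonneg _) hs]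
  exact ENNReal.ofReal_ne_top

theorem ae_summable_indicator_of_measureReal_le_mul [IsFiniteMeasure P] {ι : Type*}
    [Countable ι] {A : ι → Set Ω} (hA : ∀ j, MeasurableSet (A j)) {θ : ι → ℝ}
    (hθ : ∀ j, 0 ≤ θ j) (hθ2 : Summable fun j => θ j ^ 2) {c : ℝ}
    (hP : ∀ j, P.real (A j) ≤ c * θ j) :
    ∀ᵐ ω ∂P, Summable fun j => (A j).indicator (fun _ => θ j) ω := by
  refine ae_summable_of_summable_integral_norm (fun j => (integrable_const _).indicator (hA j))
    ((hθ2.mul_left c).of_nonneg_of_le (fun j => integral_nonneg fun _ => norm_nonneg _)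
      fun j => ?_)
  simp only [norm_indicator_eq_indicator_norm, integral_indicator_const _ (hA _), smul_eq_mul,
    Real.norm_of_nonneg (hθ j)]
  nlinarith [hP j, hθ j]

theorem aemeasurable_tsum_of_ae_summable {Y : ℕ → Ω → ℝ} (hY : ∀ j, Measurable (Y j))
    (hsum : ∀ᵐ ω ∂P, Summable fun j => Y j ω) : AEMeasurable (fun ω => ∑' j, Y j ω) P :=
  aemeasurable_of_tendsto_metrizable_ae'
    (fun _ => (Finset.measurable_sum _ fun j _ => hY j).aemeasurable)
    (hsum.mono fun _ h => h.hasSum.tendsto_sum_nat)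

theorem charFun_map_eq_integral {X : Ω → ℝ} (hX : AEMeasurable X P) (u : ℝ) :
    charFun (P.map X) u = ∫ ω, exp (u * X ω * I) ∂P := by
  rw [charFun_apply_real, integral_map hX (by fun_prop)]

theorem norm_integral_exp_affine_eq_norm_charFun {X : Ω → ℝ} (hX : AEMeasurable X P)
    (u a b : ℝ) :
    ‖∫ ω, exp (I * ↑(u * (a * X ω - b))) ∂P‖ = ‖charFun (P.map X) (u * a)‖ := by
  have hphase : ∀ ω, exp (I * ↑(u * (a * X ω - b)))
      = exp (↑(-(u * b)) * I) * exp (↑(u * a) * X ω * I) := fun ω => by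
    rw [← Complex.exp_add]
    push_cast
    ring_nf
  simp_rw [hphase, integral_const_mul, norm_mul, norm_exp_ofReal_mul_I, one_mul,
    charFun_map_eq_integral hX]

theorem norm_charFun_map_le_one [IsProbabilityMeasure P] {E : Type*} [SeminormedAddCommGroup E]
    [InnerProductSpace ℝ E] [MeasurableSpace E] {X : Ω → E} (hX : AEMeasurable X P) (u : E) :
    ‖charFun (P.map X) u‖ ≤ 1 :=
  have := Measure.isProbabilityMeasure_map hX
  norm_charFun_le_one u

theorem charFun_map_indicator_const [IsProbabilityMeasure P] {A : Set Ω} (hA : MeasurableSet A)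
    (a u : ℝ) :
    charFun (P.map (A.indicator fun _ => a)) u = 1 - P.real A + P.real A * exp (↑(u * a) * I) := by
  have hpt : (fun ω => exp (u * A.indicator (fun _ => a) ω * I))
      = fun ω => 1 + A.indicator (fun _ => exp (↑(u * a) * I) - 1) ω := by
    ext ω
    by_cases h : ω ∈ A <;> simp [h]
  rw [charFun_map_eq_integral (aemeasurable_const.indicator hA), hpt,
    integral_add (integrable_const _) ((integrable_const _).indicator hA),
    integral_indicator_const _ hA]
  simp only [integral_const, probReal_univ, one_smul, real_smul]
  ring

theorem norm_sq_charFun_map_indicator_const [IsProbabilityMeasure P] {A : Set Ω}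
    (hA : MeasurableSet A) (a u : ℝ) :
    ‖charFun (P.map (A.indicator fun _ => a)) u‖ ^ 2
      = 1 - 2 * P.real A * (1 - P.real A) * (1 - Real.cos (u * a)) := by
  rw [charFun_map_indicator_const hA, norm_sq_one_sub_add_mul_exp_mul_I]

theorem tendsto_prod_charFun_of_iIndepFun {Y : ℕ → Ω → ℝ} (hY : ∀ j, Measurable (Y j))
    (hind : iIndepFun Y P) (hsum : ∀ᵐ ω ∂P, Summable fun j => Y j ω) (u : ℝ) :
    Tendsto (fun n => ∏ j ∈ Finset.range n, charFun (P.map (Y j)) u) atTop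
      (𝓝 (charFun (P.map fun ω => ∑' j, Y j ω) u)) := by
  have := hind.isProbabilityMeasure
  have hmeas : ∀ n, AEMeasurable (fun ω => ∑ j ∈ Finset.range n, Y j ω) P :=
    fun n => (Finset.measurable_sum _ fun j _ => hY j).aemeasurable
  have hcont : Continuous fun x : ℝ => exp (u * x * I) := by fun_prop
  have hprod : ∀ n, ∏ j ∈ Finset.range n, charFun (P.map (Y j)) u
      = ∫ ω, exp (u * ↑(∑ j ∈ Finset.range n, Y j ω) * I) ∂P := fun n => by
    rw [← Finset.prod_apply, ← (hind.restrict _).charFun_map_fun_finsetSum_eq_prod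
      fun j _ => (hY j).aemeasurable, charFun_map_eq_integral (hmeas n)]
  rw [charFun_map_eq_integral (aemeasurable_tsum_of_ae_summable hY hsum)]
  refine (tendsto_integral_of_dominated_convergence (fun _ => 1)
    (fun n => hcont.comp_aestronglyMeasurable (hmeas n).aestronglyMeasurable)
    (integrable_const 1) (fun _ => ae_of_all _ fun ω => ?_) ?_).congr fun n => (hprod n).symm
  · rw [← ofReal_mul, norm_exp_ofReal_mul_I]
  · exact hsum.mono fun ω h => (hcont.tendsto _).comp h.hasSum.tendsto_sum_nat

theorem hasProd_norm_charFun_of_iIndepFun {Y : ℕ → Ω → ℝ} (hY : ∀ j, Measurable (Y j))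
    (hind : iIndepFun Y P) (hsum : ∀ᵐ ω ∂P, Summable fun j => Y j ω) (u : ℝ) :
    HasProd (fun j => ‖charFun (P.map (Y j)) u‖) ‖charFun (P.map fun ω => ∑' j, Y j ω) u‖ := by
  have := hind.isProbabilityMeasure
  obtain ⟨a, ha⟩ := Real.multipliable_of_nonneg_of_le_one (fun j => norm_nonneg _)
    fun j => norm_charFun_map_le_one (P := P) (hY j).aemeasurable u
  convert ha
  refine tendsto_nhds_unique ?_ ha.tendsto_prod_nat
  simpa [norm_prod] using (tendsto_prod_charFun_of_iIndepFun hY hind hsum u).norm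

end

theorem char_function_squared_modulus_general
    {Ω : Type*} [MeasurableSpace Ω] (P : Measure Ω) [IsProbabilityMeasure P]
    (θ : ℕ → ℝ) (hθ : ∀ j, 0 < θ j) (hθ2 : Summable (fun j => θ j ^ 2))
    (lam t v : ℝ) (ht : 0 < t)
    (ξ : ℕ → Ω → ℝ) (hmeas : ∀ j, Measurable (ξ j))
    (hindep : iIndepFun ξ P)
    (hdist : ∀ j, ∀ s : ℝ, 0 ≤ s →
      P {ω | ξ j ω ≤ s} = ENNReal.ofReal (1 - Real.exp (-(θ j) * s)))
    (S : Ω → ℝ)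
    (hS : ∀ ω, S ω = lam * (∑' j, θ j * (if ξ j ω ≤ t then (1:ℝ) else 0)) - t) :
    ‖∫ ω, Complex.exp (Complex.I * ((v * S ω : ℝ) : ℂ)) ∂P‖ ^ 2
        = ∏' j, (1 - 2 * Real.exp (-t * θ j) * (1 - Real.exp (-t * θ j))
            * (1 - Real.cos (v * lam * θ j))) ∧
      ‖∫ ω, Complex.exp (Complex.I * ((v * S ω : ℝ) : ℂ)) ∂P‖ ^ 2
        ≤ Real.exp (-2 * ∑' j, Real.exp (-t * θ j) * (1 - Real.exp (-t * θ j))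
            * (1 - Real.cos (v * lam * θ j))) := by
  set Y : ℕ → Ω → ℝ := fun j => {ω | ξ j ω ≤ t}.indicator fun _ => θ j
  have hA : ∀ j, MeasurableSet {ω | ξ j ω ≤ t} := fun j =>
    measurableSet_le (hmeas j) measurable_const
  have hY : ∀ j, Measurable (Y j) := fun j => measurable_const.indicator (hA j)
  have hPA : ∀ j, P.real {ω | ξ j ω ≤ t} = 1 - Real.exp (-t * θ j) := fun j => by
    rw [measureReal_def, hdist j t ht.le, show -θ j * t = -t * θ j by ring,
      ENNReal.toReal_ofReal (sub_nonneg.2 (Real.exp_le_one_iff.2 (by nlinarith [hθ j])))]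
  have hsum : ∀ᵐ ω ∂P, Summable fun j => Y j ω :=
    ae_summable_indicator_of_measureReal_le_mul (c := t) hA (fun j => (hθ j).le) hθ2 fun j => by
      rw [hPA, neg_mul]
      linarith [Real.one_sub_le_exp_neg (t * θ j)]
  have hindY : iIndepFun Y P :=
    hindep.comp _ fun j => measurable_const.indicator measurableSet_Iic
  have hprod : ‖∫ ω, exp (I * ((v * S ω : ℝ) : ℂ)) ∂P‖ ^ 2
      = ∏' j, ‖charFun (P.map (Y j)) (v * lam)‖ ^ 2 := by
    have hYapp : ∀ j ω, θ j * (if ξ j ω ≤ t then (1:ℝ) else 0) = Y j ω := fun j ω => by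
      by_cases h : ξ j ω ≤ t <;> simp [Y, h]
    simp_rw [hS, hYapp]
    rw [norm_integral_exp_affine_eq_norm_charFun (aemeasurable_tsum_of_ae_summable hY hsum),
      ((hasProd_norm_charFun_of_iIndepFun hY hindY hsum _).pow 2).tprod_eq]
  have hfactor : ∀ j, ‖charFun (P.map (Y j)) (v * lam)‖ ^ 2
      = 1 - 2 * Real.exp (-t * θ j) * (1 - Real.exp (-t * θ j))
        * (1 - Real.cos (v * lam * θ j)) := fun j => by
    rw [norm_sq_charFun_map_indicator_const (hA j), hPA]
    ring
  refine ⟨hprod.trans (tprod_congr hfactor), ?_⟩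
  calc _ = ∏' j, ‖charFun (P.map (Y j)) (v * lam)‖ ^ 2 := hprod
    _ ≤ Real.exp (-∑' j, (1 - ‖charFun (P.map (Y j)) (v * lam)‖ ^ 2)) :=
      Real.tprod_le_exp_neg_tsum_one_sub (fun j => sq_nonneg _) fun j =>
        pow_le_one₀ (norm_nonneg _) (norm_charFun_map_le_one (hY j).aemeasurable _)
    _ = _ := by simp_rw [hfactor, sub_sub_cancel, mul_assoc, tsum_mul_left, neg_mul]

/-- For `S(t) = λ ∑ⱼ θⱼ 1{ξⱼ ≤ t} − t` with `ξⱼ ~ Exp(θⱼ)` independent and `∑ θⱼ² < ∞`,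
the characteristic function `φ_t(v) = E[e^{ivS(t)}]` satisfies
`|φ_t(v)|² = ∏ⱼ (1 − 2e^{−tθⱼ}(1−e^{−tθⱼ})(1−cos(vλθⱼ)))`, and in particular
`|φ_t(v)|² ≤ exp(−2∑ⱼ e^{−tθⱼ}(1−e^{−tθⱼ})(1−cos(vλθⱼ)))`. -/
theorem char_function_squared_modulus
    {Ω : Type*} [MeasurableSpace Ω] (P : Measure Ω) [IsProbabilityMeasure P]
    (θ : ℕ → ℝ) (hθ : ∀ j, 0 < θ j) (hθ2 : Summable (fun j => θ j ^ 2))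
    (lam t v : ℝ) (hlam : 0 < lam) (ht : 0 < t)
    (ξ : ℕ → Ω → ℝ) (hmeas : ∀ j, Measurable (ξ j))
    (hindep : iIndepFun ξ P)
    (hdist : ∀ j, ∀ s : ℝ, 0 ≤ s →
      P {ω | ξ j ω ≤ s} = ENNReal.ofReal (1 - Real.exp (-(θ j) * s)))
    (S : Ω → ℝ)
    (hS : ∀ ω, S ω = lam * (∑' j, θ j * (if ξ j ω ≤ t then (1:ℝ) else 0)) - t) :
    ‖∫ ω, Complex.exp (Complex.I * ((v * S ω : ℝ) : ℂ)) ∂P‖ ^ 2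
        = ∏' j, (1 - 2 * Real.exp (-t * θ j) * (1 - Real.exp (-t * θ j))
            * (1 - Real.cos (v * lam * θ j))) ∧
      ‖∫ ω, Complex.exp (Complex.I * ((v * S ω : ℝ) : ℂ)) ∂P‖ ^ 2
        ≤ Real.exp (-2 * ∑' j, Real.exp (-t * θ j) * (1 - Real.exp (-t * θ j))
            * (1 - Real.cos (v * lam * θ j))) :=
  char_function_squared_modulus_general P θ hθ hθ2 lam t v ht ξ hmeas hindep hdist S hS
end
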